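/- Fix a natural number m with 1 ≤ m < n and let r_1,…,r_m be nonzero elements of 𝕊. Then the set 𝕊 \ (M(r_1) + ⋯ + M(r_m)) is nonempty, and its minimal height m₀ := min{h(q) : q ∈ 𝕊 \ (M(r_1)+⋯+M(r_m)), q ≠ 0} satisfies m₀ ≠ h(r_j) + n·k for every j ∈ {1,…,m} and every k ∈ ℕ ∪ {0} (i.e., m₀ is incongruent to each h(r_j) modulo n). -/

import Mathlib

open Polynomial

/-- The height of an `n`-dimensional vector polynomial `p = (P_1, ..., P_n)`:
`h(p) = max (n * deg P_j + j - 1)` over `1 <= j <= n`, taken in `Z union {-infty}`,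
with `deg 0 = -infty` and `h(0) = -infty`.  (Entries are indexed by `j : Fin n`,
so `j.val` plays the role of `j - 1`.) -/
noncomputable def height (n : ℕ) (p : Fin n → ℂ[X]) : WithBot ℤ :=
  Finset.univ.sup fun j => if p j = 0 then (⊥ : WithBot ℤ)
    else (((n * (p j).natDegree + j.val : ℕ) : ℤ) : WithBot ℤ)

/-- The solution set `S` of the interpolation problem: all vector polynomials
`p` such that the linear combination of the entries evaluated at the node `z j`
with coefficients `α j` vanishes, for every node `j`. -/
def Sol (n N : ℕ) (z : Fin N → ℂ) (α : Fin N → Fin n → ℂ) : Set (Fin n → ℂ[X]) :=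
  {p | ∀ j : Fin N, ∑ k : Fin n, α j k * (p k).eval (z j) = 0}

/-- `M(r_1) + ... + M(r_m)`: the set of sums of scalar-polynomial multiples of
the vector polynomials `r_1, ..., r_m`. -/
def Msum (n m : ℕ) (r : Fin m → (Fin n → ℂ[X])) : Set (Fin n → ℂ[X]) :=
  {q | ∃ S : Fin m → ℂ[X], q = ∑ j, S j • r j}

/-!
The vectors `w • e_k`, where `w = ∏ (X - z_j)` vanishes at every node, lie in `𝕊` and are linearly
independent, so the `n` of them cannot all lie in the span of `m < n` vectors `r_j`.

Since `0 ≤ j - 1 < n`, the height `n * deg P_j + j - 1` of an entry determines `j` and `deg P_j`.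
So if `h(q) = h(r) + n k` with `q ≠ 0`, the heights of `q` and `r` are attained at the same entry
`a`, with `deg q_a = deg r_a + k`. Subtracting `c X^k • r`, where `c` is the ratio of the leading
coefficients, cancels the leading term of `q_a` without raising any other entry above `h(q)`, and
so lowers the height. Both `𝕊` and the complement of `M(r_1) + ⋯ + M(r_m)` are stable under this
subtraction, so `q` was not of minimal height.
-/

lemma eq_and_eq_of_mul_add_eq_mul_add {n x y i j : ℕ} (hi : i < n) (hj : j < n)
    (h : n * x + i = n * y + j) : x = y ∧ i = j := by
  have hn : 0 < n := by omega
  obtain ⟨hx, hi'⟩ := (Nat.div_mod_unique hn).2 ⟨add_comm i (n * x), hi⟩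
  obtain ⟨hy, hj'⟩ := (Nat.div_mod_unique hn).2 ⟨add_comm j (n * y), hj⟩
  rw [h] at hx hi'
  exact ⟨hx.symm.trans hy, hi'.symm.trans hj'⟩

theorem LinearIndependent.const_smul {ι R M : Type*} [CommRing R] [AddCommGroup M] [Module R M]
    [IsCancelMulZero R] [Module.IsTorsionFree R M] {v : ι → M} (hv : LinearIndependent R v) {c : R}
    (hc : c ≠ 0) : LinearIndependent R fun i => c • v i :=
  hv.map' (DistribSMul.toLinearMap R M c) (LinearMap.ker_eq_bot.2 (smul_right_injective M hc))

section Height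

variable {n : ℕ}

lemma height_zero : height n 0 = ⊥ := by
  simp [height]

lemma coe_le_height {p : Fin n → ℂ[X]} {i : Fin n} (hi : p i ≠ 0) :
    (((n * (p i).natDegree + i : ℕ) : ℤ) : WithBot ℤ) ≤ height n p :=
  (if_neg hi).symm.le.trans (Finset.le_sup (f := fun j => if p j = 0 then (⊥ : WithBot ℤ)
    else (((n * (p j).natDegree + j.val : ℕ) : ℤ) : WithBot ℤ)) (Finset.mem_univ i))

lemma exists_height_eq {p : Fin n → ℂ[X]} (hp : p ≠ 0) :
    ∃ a : Fin n, p a ≠ 0 ∧ height n p = (((n * (p a).natDegree + a : ℕ) : ℤ) : WithBot ℤ) := by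
  obtain ⟨i, hi⟩ := Function.ne_iff.mp hp
  have : Nonempty (Fin n) := ⟨i⟩
  obtain ⟨a, -, ha⟩ := Finset.exists_mem_eq_sup Finset.univ Finset.univ_nonempty
    fun j => if p j = 0 then (⊥ : WithBot ℤ)
      else (((n * (p j).natDegree + j.val : ℕ) : ℤ) : WithBot ℤ)
  have hpa : p a ≠ 0 := by
    intro h0
    have := coe_le_height hi
    rw [height, ha, if_pos h0] at this
    exact WithBot.not_coe_le_bot _ this
  exact ⟨a, hpa, by rw [height, ha, if_neg hpa]⟩

lemma height_sub_le (p q : Fin n → ℂ[X]) :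
    height n (p - q) ≤ max (height n p) (height n q) := by
  refine Finset.sup_le fun i _ => ?_
  split_ifs with h
  · exact bot_le
  rw [Pi.sub_apply] at h ⊢
  rcases eq_or_ne (p i) 0 with hp | hp
  · rw [hp, zero_sub, natDegree_neg]
    exact le_max_of_le_right (coe_le_height fun hq => h (by rw [hp, hq, sub_zero]))
  rcases eq_or_ne (q i) 0 with hq | hq
  · rw [hq, sub_zero]
    exact le_max_of_le_left (coe_le_height hp)
  have hsub := natDegree_sub_le (p i) (q i)
  rcases le_total (p i).natDegree (q i).natDegree with hle | hle
  · rw [max_eq_right hle] at hsub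
    refine le_max_of_le_right (le_trans ?_ (coe_le_height hq))
    exact_mod_cast (by gcongr : n * (p i - q i).natDegree + i ≤ n * (q i).natDegree + i)
  · rw [max_eq_left hle] at hsub
    refine le_max_of_le_left (le_trans ?_ (coe_le_height hp))
    exact_mod_cast (by gcongr : n * (p i - q i).natDegree + i ≤ n * (p i).natDegree + i)

lemma height_smul_le (S : ℂ[X]) (p : Fin n → ℂ[X]) :
    height n (S • p) ≤ (((n * S.natDegree : ℕ) : ℤ) : WithBot ℤ) + height n p := by
  refine Finset.sup_le fun i _ => ?_
  split_ifs with h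
  · exact bot_le
  rw [Pi.smul_apply, smul_eq_mul] at h ⊢
  have hpi : p i ≠ 0 := right_ne_zero_of_mul h
  calc (((n * (S * p i).natDegree + i : ℕ) : ℤ) : WithBot ℤ)
      ≤ (((n * S.natDegree + (n * (p i).natDegree + i) : ℕ) : ℤ) : WithBot ℤ) := by
        have := natDegree_mul_le (p := S) (q := p i)
        exact_mod_cast (by nlinarith : n * (S * p i).natDegree + i ≤ _)
    _ = (((n * S.natDegree : ℕ) : ℤ) : WithBot ℤ)
          + (((n * (p i).natDegree + i : ℕ) : ℤ) : WithBot ℤ) := by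
        push_cast; rfl
    _ ≤ _ := by gcongr; exact coe_le_height hpi

lemma height_lt_of_le_of_degree_lt {p : Fin n → ℂ[X]} {d : ℕ} {a : Fin n}
    (hle : height n p ≤ (((n * d + a : ℕ) : ℤ) : WithBot ℤ)) (ha : (p a).degree < d) :
    height n p < (((n * d + a : ℕ) : ℤ) : WithBot ℤ) := by
  refine (Finset.sup_lt_iff (WithBot.bot_lt_coe _)).2 fun i _ => ?_
  split_ifs with hi
  · exact WithBot.bot_lt_coe _
  have hle_i : n * (p i).natDegree + i ≤ n * d + a := by
    exact_mod_cast (coe_le_height hi).trans hle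
  refine WithBot.coe_lt_coe.2 (Int.ofNat_lt.2 (hle_i.lt_of_ne fun heq => ?_))
  obtain ⟨hd, hia⟩ := eq_and_eq_of_mul_add_eq_mul_add i.isLt a.isLt heq
  obtain rfl : i = a := Fin.ext hia
  exact ha.ne (by rw [degree_eq_natDegree hi, hd])

end Height

lemma exists_height_sub_smul_lt {n : ℕ} {q r : Fin n → ℂ[X]} (hq : q ≠ 0) {k : ℕ}
    (h : height n q = height n r + (((n * k : ℕ) : ℤ) : WithBot ℤ)) :
    ∃ S : ℂ[X], height n (q - S • r) < height n q := by
  obtain ⟨a, hqa, hqh⟩ := exists_height_eq hq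
  have hr : r ≠ 0 := by
    rintro rfl
    rw [height_zero, WithBot.bot_add, hqh] at h
    exact WithBot.coe_ne_bot h
  obtain ⟨b, hrb, hrh⟩ := exists_height_eq hr
  obtain ⟨hdeg, rfl⟩ : (q a).natDegree = (r b).natDegree + k ∧ a = b := by
    rw [hqh, hrh] at h
    have h' : n * (q a).natDegree + a = n * ((r b).natDegree + k) + b := by
      rw [mul_add, add_right_comm]
      exact_mod_cast h
    obtain ⟨hd, hab⟩ := eq_and_eq_of_mul_add_eq_mul_add a.isLt b.isLt h'
    exact ⟨hd, Fin.ext hab⟩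
  set c := (q a).leadingCoeff / (r a).leadingCoeff
  have hc : c ≠ 0 := div_ne_zero (leadingCoeff_ne_zero.2 hqa) (leadingCoeff_ne_zero.2 hrb)
  have hSra : (C c * X ^ k * r a).natDegree = (q a).natDegree := by
    rw [natDegree_mul (by simpa using hc) hrb, natDegree_C_mul_X_pow k c hc, hdeg, add_comm]
  refine ⟨C c * X ^ k, ?_⟩
  rw [hqh]
  apply height_lt_of_le_of_degree_lt
  · calc height n (q - (C c * X ^ k) • r)
        ≤ max (height n q) (height n ((C c * X ^ k) • r)) := height_sub_le _ _
      _ ≤ _ := max_le hqh.le ?_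
    calc height n ((C c * X ^ k) • r)
        ≤ (((n * (C c * X ^ k).natDegree : ℕ) : ℤ) : WithBot ℤ) + height n r :=
          height_smul_le _ _
      _ = _ := by
        rw [natDegree_C_mul_X_pow k c hc, hrh, hdeg, ← WithBot.coe_add, ← Nat.cast_add]
        ring_nf
  · rw [← degree_eq_natDegree hqa, Pi.sub_apply, Pi.smul_apply, smul_eq_mul]
    refine degree_sub_lt_left ?_ hqa ?_
    · rw [degree_eq_natDegree hqa, degree_eq_natDegree (mul_ne_zero (by simpa using hc) hrb), hSra]
    · rw [leadingCoeff_mul, leadingCoeff_C_mul_X_pow, div_mul_cancel₀ _ (leadingCoeff_ne_zero.2 hrb)]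

section Solutions

variable {n N m : ℕ} {z : Fin N → ℂ} {α : Fin N → Fin n → ℂ}

variable (n N z α) in
def solSubmodule : Submodule ℂ[X] (Fin n → ℂ[X]) where
  carrier := Sol n N z α
  add_mem' {p q} hp hq j := by
    simp only [Pi.add_apply, eval_add, mul_add, Finset.sum_add_distrib, hp j, hq j, add_zero]
  zero_mem' j := by simp
  smul_mem' S p hp j := by
    simp only [Pi.smul_apply, smul_eq_mul, eval_mul, mul_left_comm _ (eval _ S), ← Finset.mul_sum,
      hp j, mul_zero]

lemma msum_eq_span (r : Fin m → Fin n → ℂ[X]) :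
    Msum n m r = Submodule.span ℂ[X] (Set.range r) := by
  ext q
  simp [Msum, Submodule.mem_span_range_iff_exists_fun, eq_comm]

lemma prod_X_sub_C_smul_mem_sol (v : Fin n → ℂ[X]) :
    (∏ j, (X - C (z j))) • v ∈ Sol n N z α := by
  intro j
  simp [eval_prod, Finset.prod_eq_zero (Finset.mem_univ j)]

lemma sol_diff_msum_nonempty (hmn : m < n) (r : Fin m → Fin n → ℂ[X]) :
    (Sol n N z α \ Msum n m r).Nonempty := by
  by_contra hempty
  rw [Set.not_nonempty_iff_eq_empty, Set.sdiff_eq_empty, msum_eq_span] at hempty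
  have hP : ∏ j, (X - C (z j)) ≠ 0 :=
    (monic_prod_of_monic _ _ fun j _ => monic_X_sub_C (z j)).ne_zero
  have hli := (Pi.basisFun ℂ[X] (Fin n)).linearIndependent.const_smul hP
  classical
  have hcard := linearIndependent_le_span' _ hli (Set.range r) <| by
    rintro _ ⟨k, rfl⟩
    exact hempty (prod_X_sub_C_smul_mem_sol _)
  rw [Cardinal.mk_fin, Nat.cast_le] at hcard
  exact hmn.not_ge (hcard.trans ((Fintype.card_range_le r).trans_eq (Fintype.card_fin m)))

end Solutions

theorem stmt_14_general (n N : ℕ)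
    (z : Fin N → ℂ) (α : Fin N → Fin n → ℂ)
    (m : ℕ) (hmn : m < n)
    (r : Fin m → (Fin n → ℂ[X]))
    (hr : ∀ j : Fin m, r j ∈ Sol n N z α ∧ r j ≠ 0) :
    (Sol n N z α \ Msum n m r).Nonempty ∧
      ∀ q ∈ Sol n N z α \ Msum n m r, q ≠ 0 →
        (∀ q' ∈ Sol n N z α \ Msum n m r, q' ≠ 0 → height n q ≤ height n q') →
        ∀ (j : Fin m) (k : ℕ),
          height n q ≠ height n (r j) + (((n * k : ℕ) : ℤ) : WithBot ℤ) := by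
  refine ⟨sol_diff_msum_nonempty hmn r, ?_⟩
  rintro q ⟨hqS, hqM⟩ hq0 hmin j k hheight
  obtain ⟨S, hlt⟩ := exists_height_sub_smul_lt hq0 hheight
  have hq'S : q - S • r j ∈ Sol n N z α :=
    (solSubmodule n N z α).sub_mem hqS ((solSubmodule n N z α).smul_mem S (hr j).1)
  rw [msum_eq_span] at hqM hmin
  have hq'M : q - S • r j ∉ Submodule.span ℂ[X] (Set.range r) := fun h =>
    hqM (by simpa using add_mem h (Submodule.smul_mem _ S (Submodule.subset_span ⟨j, rfl⟩)))
  have hq'0 : q - S • r j ≠ 0 := fun h => hq'M (h ▸ zero_mem _)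
  exact hlt.not_ge (hmin _ ⟨hq'S, hq'M⟩ hq'0)

/-- For `1 ≤ m < n` and nonzero `r_1, ..., r_m ∈ S`, the set
`S \ (M(r_1) + ... + M(r_m))` is nonempty, and its minimal height is not of
the form `h(r_j) + n * k` for any `j ∈ {1, ..., m}` and any `k ∈ ℕ ∪ {0}`. -/
theorem stmt_14 (n N : ℕ) (hn : 1 ≤ n) (hN : 1 ≤ N)
    (z : Fin N → ℂ) (α : Fin N → Fin n → ℂ)
    (hα : ∀ j : Fin N, 0 < ∑ k : Fin n, ‖α j k‖)
    (m : ℕ) (hm1 : 1 ≤ m) (hmn : m < n)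
    (r : Fin m → (Fin n → ℂ[X]))
    (hr : ∀ j : Fin m, r j ∈ Sol n N z α ∧ r j ≠ 0) :
    (Sol n N z α \ Msum n m r).Nonempty ∧
      ∀ q ∈ Sol n N z α \ Msum n m r, q ≠ 0 →
        (∀ q' ∈ Sol n N z α \ Msum n m r, q' ≠ 0 → height n q ≤ height n q') →
        ∀ (j : Fin m) (k : ℕ),
          height n q ≠ height n (r j) + (((n * k : ℕ) : ℤ) : WithBot ℤ) :=
  stmt_14_general n N z α m hmn r hr
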